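/- Let n ≥ 3, k ∈ {1,…,n}, and let Λ ∈ ℝ^n satisfy ‖Λ‖_∞ ≤ L. Let u, û ∈ ℝ^n be orthonormal vectors with u_k² + û_k² < 1, and let U : ℝ^{n−2} → ℝ^n be a linear isometry onto span(u,û)^⊥ (so U^TU = I_{n−2} and UU^T = I_n − uu^T − ûû^T). Define P := (1/‖U^T e_k‖²)·U^T e_k e_k^T U and B := U^T diag(Λ) U. Then | Tr(PB) − λ_k | ≤ 2L·( u_k² + û_k² ) / ( 1 − u_k² − û_k² ). -/
import Mathlib

open Matrix

noncomputable section

/-- Trace comparison for the compressed projection and diagonal matrix: with `u, û`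
orthonormal, `U` an isometry onto `span(u,û)^⊥`, `P` the rank-one projection in the
direction `Uᵀ e_k`, and `B = Uᵀ diag(Λ) U`, one has
`|Tr(PB) - λ_k| ≤ 2L (u_k² + û_k²)/(1 - u_k² - û_k²)`. -/
theorem trace_compressed_projection
    (n : ℕ) (hn : 3 ≤ n) (k : Fin n) (Λ : Fin n → ℝ) (L : ℝ)
    (hΛ : ∀ i, |Λ i| ≤ L)
    (u v : Fin n → ℝ)
    (hu : ∑ i, u i ^ 2 = 1) (hv : ∑ i, v i ^ 2 = 1) (huv : ∑ i, u i * v i = 0)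
    (hk : u k ^ 2 + v k ^ 2 < 1)
    (U : Matrix (Fin n) (Fin (n - 2)) ℝ)
    (hUiso : Uᵀ * U = 1)
    (hUrange : U * Uᵀ = 1 - Matrix.vecMulVec u u - Matrix.vecMulVec v v) :
    |((((1 : ℝ) / ∑ a, U k a ^ 2) •
          Matrix.vecMulVec (fun a => U k a) (fun a => U k a)) *
        (Uᵀ * Matrix.diagonal Λ * U)).trace - Λ k|
      ≤ 2 * L * (u k ^ 2 + v k ^ 2) / (1 - u k ^ 2 - v k ^ 2) := by
  have hL : 0 ≤ L := le_trans (abs_nonneg _) (hΛ k)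
  set m : Fin n → ℝ := fun i => (U * Uᵀ) i k with hm
  have hmval : ∀ i, m i = (if i = k then (1:ℝ) else 0) - u i * u k - v i * v k := by
    intro i
    have := congrFun (congrFun hUrange i) k
    simpa [Matrix.one_apply, Matrix.vecMulVec_apply, Matrix.sub_apply, hm] using this
  have hsum_w : (∑ a, U k a ^ 2) = m k := by
    simp [hm, Matrix.mul_apply, Matrix.transpose_apply, pow_two]
  have hmk : m k = 1 - u k ^ 2 - v k ^ 2 := by
    rw [hmval k]; simp; ring
  have hs_pos : 0 < m k := by rw [hmk]; linarith
  have hsym : ∀ i, (U * Uᵀ) k i = m i := by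
    intro i
    simp [hm, Matrix.mul_apply, Matrix.transpose_apply, mul_comm]
  have hproj : U * Uᵀ * (U * Uᵀ) = U * Uᵀ := by
    calc U * Uᵀ * (U * Uᵀ) = U * (Uᵀ * U) * Uᵀ := by
          rw [Matrix.mul_assoc, Matrix.mul_assoc, Matrix.mul_assoc]
      _ = U * Uᵀ := by rw [hUiso, Matrix.mul_one]
  have hsumsq : ∑ i, m i ^ 2 = m k := by
    have h := congrFun (congrFun hproj k) k
    rw [Matrix.mul_apply] at h
    calc ∑ i, m i ^ 2 = ∑ i, (U * Uᵀ) k i * (U * Uᵀ) i k := by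
          refine Finset.sum_congr rfl fun i _ => ?_
          rw [hsym i, pow_two, hm]
      _ = m k := h
  have hmi : ∀ i, m i = ∑ a, U i a * U k a := by
    intro i; simp [hm, Matrix.mul_apply, Matrix.transpose_apply]
  have htr : ((((1 : ℝ) / ∑ a, U k a ^ 2) •
          Matrix.vecMulVec (fun a => U k a) (fun a => U k a)) *
        (Uᵀ * Matrix.diagonal Λ * U)).trace
      = (1 / m k) * ∑ i, Λ i * m i ^ 2 := by
    rw [hsum_w]
    rw [Matrix.smul_mul, Matrix.trace_smul, smul_eq_mul]
    congr 1
    rw [Matrix.trace]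
    simp only [Matrix.diag_apply, Matrix.mul_apply, Matrix.vecMulVec_apply,
      Matrix.transpose_apply, Finset.sum_mul, Finset.mul_sum,
      Matrix.diagonal_apply, mul_ite, ite_mul, mul_zero, zero_mul,
      Finset.sum_ite_eq, Finset.sum_ite_eq', Finset.mem_univ, if_true]
    have key : ∀ i : Fin n,
        (∑ x : Fin (n-2), ∑ x1 : Fin (n-2), U k x * U k x1 * (U i x1 * Λ i * U i x))
          = Λ i * m i ^ 2 := by
      intro i
      rw [hmi i, pow_two, Finset.sum_mul_sum]
      simp only [Finset.mul_sum]
      exact Finset.sum_congr rfl fun a _ => Finset.sum_congr rfl fun b _ => by ring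
    calc ∑ x : Fin (n-2), ∑ x1 : Fin (n-2), ∑ i : Fin n,
            U k x * U k x1 * (U i x1 * Λ i * U i x)
        = ∑ x : Fin (n-2), ∑ i : Fin n, ∑ x1 : Fin (n-2),
            U k x * U k x1 * (U i x1 * Λ i * U i x) :=
          Finset.sum_congr rfl fun x _ => Finset.sum_comm
      _ = ∑ i : Fin n, ∑ x : Fin (n-2), ∑ x1 : Fin (n-2),
            U k x * U k x1 * (U i x1 * Λ i * U i x) := Finset.sum_comm
      _ = ∑ i : Fin n, Λ i * m i ^ 2 := Finset.sum_congr rfl fun i _ => key i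
  rw [htr]
  have hkey : (1 / m k) * ∑ i, Λ i * m i ^ 2 - Λ k
      = (1 / m k) * ∑ i, (Λ i - Λ k) * m i ^ 2 := by
    have : ∑ i, (Λ i - Λ k) * m i ^ 2
        = (∑ i, Λ i * m i ^ 2) - Λ k * m k := by
      rw [Finset.sum_congr rfl (fun i _ => sub_mul (Λ i) (Λ k) (m i ^ 2)),
        Finset.sum_sub_distrib, ← Finset.mul_sum, hsumsq]
    rw [this]
    field_simp
  rw [hkey]
  have habs : |(1 / m k) * ∑ i, (Λ i - Λ k) * m i ^ 2|
      ≤ (1 / m k) * (2 * L * (m k - m k ^ 2)) := by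
    rw [abs_mul, abs_of_pos (by positivity : (0:ℝ) < 1 / m k)]
    refine mul_le_mul_of_nonneg_left ?_ (by positivity)
    have hsplit : ∑ i ∈ Finset.univ \ {k}, m i ^ 2 = m k - m k ^ 2 := by
      have h := Finset.sum_sdiff (Finset.subset_univ ({k} : Finset (Fin n)))
        (f := fun i => m i ^ 2)
      rw [hsumsq] at h
      have h2 : ∑ i ∈ ({k} : Finset (Fin n)), m i ^ 2 = m k ^ 2 := Finset.sum_singleton _ _
      linarith [h, h2]
    calc |∑ i, (Λ i - Λ k) * m i ^ 2|
        = |∑ i ∈ Finset.univ \ {k}, (Λ i - Λ k) * m i ^ 2| := by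
          congr 1
          rw [← Finset.sum_sdiff (Finset.subset_univ {k})]
          simp
      _ ≤ ∑ i ∈ Finset.univ \ {k}, |(Λ i - Λ k) * m i ^ 2| := Finset.abs_sum_le_sum_abs _ _
      _ ≤ ∑ i ∈ Finset.univ \ {k}, 2 * L * m i ^ 2 := by
          refine Finset.sum_le_sum fun i _ => ?_
          rw [abs_mul, abs_of_nonneg (by positivity : (0:ℝ) ≤ m i ^ 2)]
          refine mul_le_mul_of_nonneg_right ?_ (by positivity)
          calc |Λ i - Λ k| ≤ |Λ i| + |Λ k| := abs_sub _ _
            _ ≤ L + L := add_le_add (hΛ i) (hΛ k)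
            _ = 2 * L := by ring
      _ = 2 * L * (m k - m k ^ 2) := by rw [← Finset.mul_sum, hsplit]
  refine le_trans habs ?_
  have hs1 : m k ≤ 1 := by rw [hmk]; nlinarith [sq_nonneg (u k), sq_nonneg (v k)]
  have : (1 / m k) * (2 * L * (m k - m k ^ 2)) = 2 * L * (1 - m k) := by
    field_simp
  rw [this, hmk]
  have hspos : (0:ℝ) < 1 - u k ^ 2 - v k ^ 2 := by linarith
  rw [le_div_iff₀ hspos]
  have ht : (0:ℝ) ≤ u k ^ 2 + v k ^ 2 := by positivity
  nlinarith [mul_nonneg (mul_nonneg hL ht) (by nlinarith : (0:ℝ) ≤ u k ^ 2 + v k ^ 2)]
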